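/- Let f̄ and f be even probability densities on ℝ such that f̄ dominates f, i.e., ∫_δ^∞ f̄(s)ds ≥ ∫_δ^∞ f(s)ds for all δ ≥ 0, and let g be a nice function (an even probability density on ℝ, continuous and nonincreasing on [0,∞)). Then the convolution f̄⋆g dominates f⋆g: ∫_δ^∞ (f̄⋆g)(s)ds ≥ ∫_δ^∞ (f⋆g)(s)ds for all δ ≥ 0. -/

import Mathlib

open MeasureTheory

noncomputable section

/-- `γ` is a probability density on `ℝ`. -/
def IsDensity1 (γ : ℝ → ℝ) : Prop := (∀ s, 0 ≤ γ s) ∧ (∫ s, γ s) = 1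

/-- A nice function: an even probability density on `ℝ`, continuous and nonincreasing on
`[0,∞)`. -/
def Nice (f : ℝ → ℝ) : Prop :=
  IsDensity1 f ∧ (∀ s, f (-s) = f s) ∧ Continuous f ∧ AntitoneOn f (Set.Ici 0)

/-- Convolution of two functions on `ℝ`. -/
def convol (f g : ℝ → ℝ) : ℝ → ℝ := fun s => ∫ r, f (s - r) * g r

/-!
With `tail f δ = ∫_δ^∞ f`, Fubini gives `tail (f⋆g) δ = (tail f ⋆ g)(δ)`, so the claim is
`(D ⋆ g)(δ) ≥ 0` for `D = tail f̄ - tail f`. For even densities `tail f (-t) = 1 - tail f t`, so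
`D` is odd, bounded, and nonnegative on `[0,∞)` by domination. Folding the convolution integral
at `0` gives `(D ⋆ g)(δ) = ∫_0^∞ D(u) (g(δ - u) - g(δ + u)) du`, and `g(δ - u) ≥ g(δ + u)` for
`δ, u ≥ 0` because `g` is even and nonincreasing in `|x|`.
-/

open Set

theorem IsDensity1.integrable {γ : ℝ → ℝ} (h : IsDensity1 γ) : Integrable γ :=
  Integrable.of_integral_ne_zero (by rw [h.2]; exact one_ne_zero)

def tail (f : ℝ → ℝ) (δ : ℝ) : ℝ := ∫ s in Ici δ, f s

section Tail

variable {f : ℝ → ℝ}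

theorem tail_antitone (hf : Integrable f) (hf₀ : ∀ s, 0 ≤ f s) : Antitone (tail f) :=
  fun _ _ hab => setIntegral_mono_set hf.integrableOn (.of_forall hf₀)
    (Ici_subset_Ici.mpr hab).eventuallyLE

theorem tail_nonneg (hf₀ : ∀ s, 0 ≤ f s) (δ : ℝ) : 0 ≤ tail f δ :=
  setIntegral_nonneg measurableSet_Ici fun s _ => hf₀ s

theorem IsDensity1.tail_le_one (hf : IsDensity1 f) (δ : ℝ) : tail f δ ≤ 1 :=
  hf.2 ▸ setIntegral_le_integral hf.integrable (.of_forall hf.1)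

theorem IsDensity1.norm_tail_le_one (hf : IsDensity1 f) (δ : ℝ) : ‖tail f δ‖ ≤ 1 := by
  rw [Real.norm_of_nonneg (tail_nonneg hf.1 δ)]
  exact hf.tail_le_one δ

theorem IsDensity1.measurable_tail (hf : IsDensity1 f) : Measurable (tail f) :=
  (tail_antitone hf.integrable hf.1).measurable

theorem IsDensity1.tail_neg (hf : IsDensity1 f) (he : ∀ s, f (-s) = f s) (t : ℝ) :
    tail f (-t) = 1 - tail f t := by
  have hreflect : ∫ x in Iic (-t), f x = tail f t := by
    rw [← integral_comp_neg_Ioi, tail, integral_Ici_eq_integral_Ioi]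
    simp_rw [he]
  have hsplit : (∫ x in Iic (-t), f x) + ∫ x in Ioi (-t), f x = 1 := by
    rw [intervalIntegral.integral_Iic_add_Ioi hf.integrable.integrableOn
      hf.integrable.integrableOn, hf.2]
  rw [tail, integral_Ici_eq_integral_Ioi]
  linarith

theorem setIntegral_Ici_comp_sub_right (r δ : ℝ) :
    ∫ s in Ici δ, f (s - r) = tail f (δ - r) := by
  have h := (measurePreserving_sub_right volume r).setIntegral_preimage_emb
    (MeasurableEquiv.subRight r).measurableEmbedding f (Ici (δ - r))
  rwa [show (· - r) ⁻¹' Ici (δ - r) = Ici δ by ext; simp] at h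

theorem tail_convol {g : ℝ → ℝ} (hf : Integrable f) (hg : Integrable g) (δ : ℝ) :
    tail (convol f g) δ = convol (tail f) g δ := by
  have hint : Integrable (fun p : ℝ × ℝ => f (p.1 - p.2) * g p.2)
      ((volume.restrict (Ici δ)).prod volume) := by
    rw [← Measure.restrict_univ (μ := volume), Measure.prod_restrict, Measure.restrict_univ]
    simpa [mul_comm] using
      (hg.convolution_integrand (ContinuousLinearMap.mul ℝ ℝ) hf).restrict
  calc tail (convol f g) δ = ∫ r, ∫ s in Ici δ, f (s - r) * g r :=
        integral_integral_swap hint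
    _ = convol (tail f) g δ := by
      simp_rw [integral_mul_const, setIntegral_Ici_comp_sub_right]; rfl

end Tail

theorem convol_sub {f₁ f₂ g : ℝ → ℝ} {δ : ℝ}
    (h₁ : Integrable fun r => f₁ (δ - r) * g r) (h₂ : Integrable fun r => f₂ (δ - r) * g r) :
    convol f₁ g δ - convol f₂ g δ = convol (f₁ - f₂) g δ := by
  simp only [convol, ← integral_sub h₁ h₂, Pi.sub_apply, sub_mul]

theorem integrable_comp_sub_left_mul {h g : ℝ → ℝ} {C : ℝ} (hh : Measurable h)
    (hbdd : ∀ t, ‖h t‖ ≤ C) (hg : Integrable g) (δ : ℝ) :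
    Integrable fun r => h (δ - r) * g r :=
  hg.bdd_mul (hh.comp (measurable_const.sub measurable_id)).aestronglyMeasurable
    (.of_forall fun _ => hbdd _)

theorem integral_eq_setIntegral_Ioi_add_comp_neg {F : ℝ → ℝ} (hF : Integrable F) :
    ∫ u, F u = ∫ u in Ioi 0, (F u + F (-u)) := by
  rw [← intervalIntegral.integral_Iic_add_Ioi (b := 0) hF.integrableOn hF.integrableOn,
    ← neg_zero, ← integral_comp_neg_Ioi, neg_zero, add_comm,
    integral_add hF.integrableOn hF.comp_neg.integrableOn]

theorem even_antitoneOn_add_le_sub {g : ℝ → ℝ} (he : ∀ s, g (-s) = g s)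
    (hmono : AntitoneOn g (Ici 0)) {δ u : ℝ} (hδ : 0 ≤ δ) (hu : 0 ≤ u) :
    g (δ + u) ≤ g (δ - u) := by
  have habs : g |δ - u| = g (δ - u) := by
    rcases abs_choice (δ - u) with h | h <;> rw [h]
    exact he _
  rw [← habs]
  exact hmono (mem_Ici.mpr (abs_nonneg _)) (mem_Ici.mpr (by linarith))
    (abs_le.mpr ⟨by linarith, by linarith⟩)

theorem convol_nonneg_of_odd {h g : ℝ → ℝ} {C : ℝ} (hh : Measurable h)
    (hbdd : ∀ t, ‖h t‖ ≤ C) (hodd : ∀ t, h (-t) = -h t) (hh₀ : ∀ t, 0 ≤ t → 0 ≤ h t)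
    (hg : Integrable g) (he : ∀ s, g (-s) = g s) (hmono : AntitoneOn g (Ici 0))
    {δ : ℝ} (hδ : 0 ≤ δ) : 0 ≤ convol h g δ := by
  have hfold : convol h g δ = ∫ u in Ioi 0, h u * (g (δ - u) - g (δ + u)) := by
    rw [convol, ← integral_sub_left_eq_self _ volume δ,
      integral_eq_setIntegral_Ioi_add_comp_neg]
    · simp only [sub_sub_cancel, sub_neg_eq_add]
      congr! 2 with u
      rw [sub_add_cancel_left, hodd]; ring
    · simpa using (integrable_comp_sub_left_mul hh hbdd hg δ).comp_sub_left δ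
  rw [hfold]
  exact setIntegral_nonneg measurableSet_Ioi fun u hu => mul_nonneg (hh₀ u hu.le)
    (sub_nonneg.mpr (even_antitoneOn_add_le_sub he hmono hδ hu.le))

/-- if the even densities `f̄, f` satisfy `f̄ ⪰ f` (tail domination on
`[0,∞)`) and `g` is nice, then `f̄⋆g ⪰ f⋆g`. -/
theorem statement19 (fbar f g : ℝ → ℝ)
    (hfbar : IsDensity1 fbar) (hf : IsDensity1 f)
    (hfbare : ∀ s, fbar (-s) = fbar s) (hfe : ∀ s, f (-s) = f s)
    (hdom : ∀ δ : ℝ, 0 ≤ δ → (∫ s in Set.Ici δ, f s) ≤ ∫ s in Set.Ici δ, fbar s)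
    (hg : Nice g) :
    ∀ δ : ℝ, 0 ≤ δ →
      (∫ s in Set.Ici δ, convol f g s) ≤ ∫ s in Set.Ici δ, convol fbar g s := by
  obtain ⟨hgd, hge, -, hgm⟩ := hg
  intro δ hδ
  have hint : ∀ {φ}, IsDensity1 φ → Integrable fun r => tail φ (δ - r) * g r := fun hφ =>
    integrable_comp_sub_left_mul hφ.measurable_tail hφ.norm_tail_le_one hgd.integrable δ
  change tail (convol f g) δ ≤ tail (convol fbar g) δ
  rw [tail_convol hf.integrable hgd.integrable, tail_convol hfbar.integrable hgd.integrable,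
    ← sub_nonneg, convol_sub (hint hfbar) (hint hf)]
  refine convol_nonneg_of_odd (C := 2) (hfbar.measurable_tail.sub hf.measurable_tail)
    (fun t => ?_) (fun t => ?_) (fun t ht => sub_nonneg.mpr (hdom t ht)) hgd.integrable hge hgm hδ
  · exact (norm_sub_le _ _).trans (by linarith [hfbar.norm_tail_le_one t, hf.norm_tail_le_one t])
  · simp only [Pi.sub_apply, hfbar.tail_neg hfbare, hf.tail_neg hfe]; ring
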